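/- arXiv:2407.06652 — 2 statements merged into one kernel-verified Lean document; each statement's English description precedes it below -/
import Mathlib

section
/- For k ≥ 3, the strong domination number of the proper enhanced power graph of the generalized quaternion group Q_{2^k} satisfies γ^strong(G_E**(Q_{2^k})) = 2^{k-1} + 2. -/
open SimpleGraph

/-- The enhanced power graph of a group `G`: distinct `x, y` are adjacent iff
both lie in a common cyclic subgroup `⟨w⟩`. -/
def enhancedPowerGraph (G : Type*) [Group G] : SimpleGraph G where
  Adj x y := x ≠ y ∧ ∃ w : G, x ∈ Subgroup.zpowers w ∧ y ∈ Subgroup.zpowers w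
  symm := by
    constructor
    rintro x y ⟨hxy, w, hx, hy⟩
    exact ⟨hxy.symm, w, hy, hx⟩
  loopless := by
    constructor
    rintro x ⟨hxx, -⟩
    exact hxx rfl

/-- The set of dominating vertices of a graph: vertices adjacent to every other vertex. -/
def SimpleGraph.domVerts {V : Type*} (Γ : SimpleGraph V) : Set V :=
  {v | ∀ u, u ≠ v → Γ.Adj v u}

/-- The proper enhanced power graph: the enhanced power graph induced on the complement of
its set of dominating vertices. -/
def properEnhancedPowerGraph (G : Type*) [Group G] :
    SimpleGraph ((enhancedPowerGraph G).domVertsᶜ : Set G) :=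
  SimpleGraph.induce ((enhancedPowerGraph G).domVertsᶜ) (enhancedPowerGraph G)

/-- A total (strongly) dominating set: every vertex has a neighbor in `D`. -/
def SimpleGraph.IsTotalDominatingSet {V : Type*} (Γ : SimpleGraph V) (D : Set V) : Prop :=
  ∀ v : V, ∃ u ∈ D, Γ.Adj v u

/-- The strong domination number: minimum size of a total dominating set. -/
noncomputable def SimpleGraph.strongDominationNumber {V : Type*} (Γ : SimpleGraph V) : ℕ :=
  sInf {n : ℕ | ∃ D : Set V, Γ.IsTotalDominatingSet D ∧ D.ncard = n}

/-- A dominating set: every vertex not in `D` has a neighbor in `D`. -/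
def SimpleGraph.IsDominatingSet {V : Type*} (Γ : SimpleGraph V) (D : Set V) : Prop :=
  ∀ v ∉ D, ∃ u ∈ D, Γ.Adj v u

/-- The domination number: minimum size of a dominating set. -/
noncomputable def SimpleGraph.dominationNumber {V : Type*} (Γ : SimpleGraph V) : ℕ :=
  sInf {n : ℕ | ∃ D : Set V, Γ.IsDominatingSet D ∧ D.ncard = n}

/-- `G` is a generalized quaternion group `Q_{2^k}` for some `k ≥ 3`. -/
def IsGeneralizedQuaternion (G : Type*) [Group G] : Prop :=
  ∃ k : ℕ, 3 ≤ k ∧ Nonempty (G ≃* QuaternionGroup (2 ^ (k - 2)))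

/-- The number of subgroups of `G` of order `p`. -/
noncomputable def numSubgroupsOfOrder (G : Type*) [Group G] (p : ℕ) : ℕ :=
  Nat.card {H : Subgroup G // Nat.card H = p}

/-!
Write `Q_{2^k} = ⟨a, x⟩` with `a` of order `2n = 2^{k-1}`. The dominating vertices of the enhanced
power graph are `1` and the unique involution `a^n`. Every `x a^i` has order `4`, so the only
cyclic subgroup containing it is `{1, x a^i, a^n, x a^{n+i}}`: in the proper graph, `x a^i` has
the single neighbour `x a^{n+i}`, while the powers `a^i` with `i ≠ 0, n` form a clique with no
edge to the other coset. A total dominating set must contain all `2n` elements `x a^i`, each being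
the only neighbour of its partner, and two vertices of the clique; conversely these suffice.
-/

namespace SimpleGraph

variable {V : Type*} {Γ : SimpleGraph V}

theorem strongDominationNumber_eq_of_forall_le {m : ℕ}
    (hex : ∃ D : Set V, Γ.IsTotalDominatingSet D ∧ D.ncard = m)
    (hle : ∀ D : Set V, Γ.IsTotalDominatingSet D → m ≤ D.ncard) :
    Γ.strongDominationNumber = m :=
  IsLeast.csInf_eq ⟨hex, by rintro _ ⟨D, hD, rfl⟩; exact hle D hD⟩

theorem IsTotalDominatingSet.mem_of_forall_adj_eq {D : Set V} (hD : Γ.IsTotalDominatingSet D)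
    {u v : V} (hv : ∀ w, Γ.Adj v w → w = u) : u ∈ D := by
  obtain ⟨w, hwD, hvw⟩ := hD v
  exact hv w hvw ▸ hwD

theorem IsTotalDominatingSet.inter_nontrivial {D A : Set V} (hD : Γ.IsTotalDominatingSet D)
    (hA : ∀ x ∈ A, ∀ y, Γ.Adj x y → y ∈ A) (hne : A.Nonempty) : (D ∩ A).Nontrivial := by
  obtain ⟨v, hvA⟩ := hne
  obtain ⟨u, huD, hvu⟩ := hD v
  have huA := hA v hvA u hvu
  obtain ⟨w, hwD, huw⟩ := hD u
  exact ⟨u, ⟨huD, huA⟩, w, ⟨hwD, hA u huA w huw⟩, huw.ne⟩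

theorem strongDominationNumber_eq_ncard_add_two [Finite V] {X : Set V}
    (hX : ∀ x ∈ X, ∃! y, Γ.Adj x y) (hXc : ∀ x ∉ X, ∀ y, Γ.Adj x y → y ∉ X)
    (hclique : Γ.IsClique Xᶜ) (hnt : Xᶜ.Nontrivial) :
    Γ.strongDominationNumber = X.ncard + 2 := by
  have partner_mem : ∀ x ∈ X, ∀ y, Γ.Adj x y → y ∈ X := fun x hx y hxy => by
    by_contra hy
    exact hXc y hy x hxy.symm hx
  have X_subset : ∀ D : Set V, Γ.IsTotalDominatingSet D → X ⊆ D := fun D hD x hx => by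
    obtain ⟨y, hxy, -⟩ := hX x hx
    exact hD.mem_of_forall_adj_eq fun z hyz =>
      (hX y (partner_mem x hx y hxy)).unique hyz hxy.symm
  obtain ⟨a, ha, b, hb, hab⟩ := hnt
  refine strongDominationNumber_eq_of_forall_le ⟨insert a (insert b X), ?_, ?_⟩ ?_
  · intro v
    by_cases hv : v ∈ X
    · obtain ⟨y, hvy, -⟩ := hX v hv
      exact ⟨y, by simp [partner_mem v hv y hvy], hvy⟩
    · by_cases hva : v = a
      · exact ⟨b, by simp, hva ▸ hclique ha hb hab⟩
      · exact ⟨a, by simp, hclique hv ha hva⟩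
  · rw [Set.ncard_insert_of_notMem (by simpa [hab] using ha), Set.ncard_insert_of_notMem hb]
  · intro D hD
    have hDX : (D ∩ Xᶜ).Nontrivial :=
      hD.inter_nontrivial hXc ⟨a, ha⟩
    rw [← Set.ncard_inter_add_ncard_sdiff_eq_ncard D X, Set.inter_eq_right.mpr (X_subset D hD),
      Set.sdiff_eq]
    have := (Set.one_lt_ncard_iff_nontrivial (s := D ∩ Xᶜ)).mpr hDX
    omega

end SimpleGraph

section EnhancedPowerGraph

open Subgroup

variable {G : Type*} [Group G]

theorem enhancedPowerGraph_adj_iff_of_zpowers_le {x y : G}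
    (hx : ∀ w, x ∈ zpowers w → zpowers w ≤ zpowers x) :
    (enhancedPowerGraph G).Adj x y ↔ x ≠ y ∧ y ∈ zpowers x :=
  ⟨fun ⟨hxy, w, hxw, hyw⟩ => ⟨hxy, hx w hxw hyw⟩, fun ⟨hxy, hy⟩ => ⟨hxy, x, mem_zpowers x, hy⟩⟩

theorem one_mem_domVerts_enhancedPowerGraph : (1 : G) ∈ (enhancedPowerGraph G).domVerts :=
  fun u hu => ⟨hu.symm, u, one_mem _, mem_zpowers u⟩

end EnhancedPowerGraph

theorem ZMod.natCast_ne_natCast_of_lt {m x y : ℕ} (hx : x < m) (hy : y < m) (hxy : x ≠ y) :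
    (x : ZMod m) ≠ y := by
  rwa [Ne, ZMod.natCast_eq_natCast_iff', Nat.mod_eq_of_lt hx, Nat.mod_eq_of_lt hy]

namespace QuaternionGroup

open Subgroup

variable {n : ℕ}

theorem xa_pow_three (i : ZMod (2 * n)) : xa i ^ 3 = xa ((n : ZMod (2 * n)) + i) := by
  rw [pow_succ, xa_sq, a_mul_xa, sub_eq_add_neg, add_comm, neg_eq_of_add_eq_zero_left]
  rw [← Nat.cast_add, ← two_mul, ZMod.natCast_self]

section

variable [NeZero n]

theorem a_mem_zpowers_a_one (i : ZMod (2 * n)) : a i ∈ zpowers (a 1 : QuaternionGroup n) := by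
  rw [← ZMod.natCast_zmod_val i, ← a_one_pow]
  exact pow_mem (mem_zpowers _) _

theorem xa_notMem_zpowers_a (i j : ZMod (2 * n)) : xa i ∉ zpowers (a j) := by
  intro h
  obtain ⟨m, hm : a 1 ^ m = xa i⟩ :=
    mem_powers_iff_mem_zpowers.mpr (zpowers_le.mpr (a_mem_zpowers_a_one j) h)
  rw [a_one_pow] at hm
  cases hm

theorem mem_zpowers_xa_iff {i : ZMod (2 * n)} {g : QuaternionGroup n} :
    g ∈ zpowers (xa i) ↔ g = 1 ∨ g = a n ∨ g = xa i ∨ g = xa ((n : ZMod (2 * n)) + i) := by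
  constructor
  · rw [← mem_powers_iff_mem_zpowers]
    rintro ⟨m, rfl⟩
    beta_reduce
    rw [← pow_mod_orderOf, orderOf_xa]
    have : m % 4 < 4 := Nat.mod_lt _ (by norm_num)
    interval_cases m % 4
    · simp
    · simp
    · simp [xa_sq]
    · simp [xa_pow_three]
  · rintro (rfl | rfl | rfl | rfl)
    · exact one_mem _
    · exact xa_sq i ▸ pow_mem (mem_zpowers _) 2
    · exact mem_zpowers _
    · exact xa_pow_three i ▸ pow_mem (mem_zpowers _) 3

theorem zpowers_eq_zpowers_xa {i : ZMod (2 * n)} {w : QuaternionGroup n}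
    (h : xa i ∈ zpowers w) : zpowers w = zpowers (xa i) := by
  cases w with
  | a j => exact absurd h (xa_notMem_zpowers_a i j)
  | xa j =>
    refine (eq_of_le_of_card_ge (zpowers_le.mpr h) ?_).symm
    rw [Nat.card_zpowers, Nat.card_zpowers, orderOf_xa, orderOf_xa]

theorem enhancedPowerGraph_adj_xa_iff {i : ZMod (2 * n)} {g : QuaternionGroup n} :
    (enhancedPowerGraph (QuaternionGroup n)).Adj (xa i) g ↔
      g = 1 ∨ g = a n ∨ g = xa ((n : ZMod (2 * n)) + i) := by
  have hn : (n : ZMod (2 * n)) ≠ 0 := (ZMod.natCast_eq_zero_iff _ _).not.mpr <|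
    Nat.not_dvd_of_pos_of_lt (NeZero.pos n) (by have := NeZero.pos n; omega)
  rw [enhancedPowerGraph_adj_iff_of_zpowers_le fun w hw => (zpowers_eq_zpowers_xa hw).le,
    mem_zpowers_xa_iff]
  constructor
  · rintro ⟨hne, rfl | rfl | rfl | rfl⟩ <;> simp_all
  · rintro (rfl | rfl | rfl)
    · exact ⟨fun h => (by cases h), Or.inl rfl⟩
    · exact ⟨by simp, Or.inr (Or.inl rfl)⟩
    · exact ⟨by simpa using hn, by simp⟩

theorem enhancedPowerGraph_adj_a_a {i j : ZMod (2 * n)} (hij : i ≠ j) :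
    (enhancedPowerGraph (QuaternionGroup n)).Adj (a i) (a j) :=
  ⟨by simpa using hij, a 1, a_mem_zpowers_a_one i, a_mem_zpowers_a_one j⟩

end

section

variable (hn : 2 ≤ n)
include hn

theorem domVerts_enhancedPowerGraph :
    (enhancedPowerGraph (QuaternionGroup n)).domVerts = {1, a n} := by
  have : NeZero n := ⟨by omega⟩
  have h10 : (1 : ZMod (2 * n)) ≠ 0 := by
    simpa using ZMod.natCast_ne_natCast_of_lt (m := 2 * n) (x := 1) (y := 0) (by omega)
      (by omega) one_ne_zero
  have h1n : (1 : ZMod (2 * n)) ≠ n := by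
    simpa using ZMod.natCast_ne_natCast_of_lt (m := 2 * n) (x := 1) (y := n) (by omega)
      (by omega) (by omega)
  ext g
  constructor
  · intro hg
    cases g with
    | a i =>
      obtain h | h | h := enhancedPowerGraph_adj_xa_iff.mp (hg (xa 0) (by simp)).symm
      exacts [Or.inl h, Or.inr h, absurd h (by simp)]
    | xa i =>
      obtain h | h | h := enhancedPowerGraph_adj_xa_iff.mp (hg (a 1) (by simp))
      exacts [absurd (a.inj h) h10, absurd (a.inj h) h1n, absurd h (by simp)]
  · rintro (rfl | rfl)
    · exact one_mem_domVerts_enhancedPowerGraph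
    · intro u hu
      cases u with
      | a j => exact enhancedPowerGraph_adj_a_a (by simpa using hu.symm)
      | xa j => exact (enhancedPowerGraph_adj_xa_iff.mpr (Or.inr (Or.inl rfl))).symm

theorem mem_compl_domVerts_enhancedPowerGraph_iff {g : QuaternionGroup n} :
    g ∈ (enhancedPowerGraph (QuaternionGroup n)).domVertsᶜ ↔ g ≠ 1 ∧ g ≠ a n := by
  simp [domVerts_enhancedPowerGraph hn, not_or]

theorem xa_mem_compl_domVerts_enhancedPowerGraph (i : ZMod (2 * n)) :
    xa i ∈ (enhancedPowerGraph (QuaternionGroup n)).domVertsᶜ :=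
  (mem_compl_domVerts_enhancedPowerGraph_iff hn).mpr ⟨fun h => (by cases h), by simp⟩

theorem a_natCast_mem_compl_domVerts_enhancedPowerGraph {x : ℕ} (hx : x < 2 * n) (h0 : x ≠ 0)
    (hxn : x ≠ n) : a (x : ZMod (2 * n)) ∈ (enhancedPowerGraph (QuaternionGroup n)).domVertsᶜ := by
  refine (mem_compl_domVerts_enhancedPowerGraph_iff hn).mpr ⟨fun h => ?_, fun h => ?_⟩
  · exact ZMod.natCast_ne_natCast_of_lt hx (by omega) h0 (by simpa using a.inj h)
  · exact ZMod.natCast_ne_natCast_of_lt hx (by omega) hxn (a.inj h)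

theorem strongDominationNumber_properEnhancedPowerGraph :
    (properEnhancedPowerGraph (QuaternionGroup n)).strongDominationNumber = 2 * n + 2 := by
  have : NeZero n := ⟨by omega⟩
  set X : Set ((enhancedPowerGraph (QuaternionGroup n)).domVertsᶜ : Set (QuaternionGroup n)) :=
    Subtype.val ⁻¹' Set.range xa
  have hX : X.ncard = 2 * n := by
    rw [Set.ncard_preimage_of_injective_subset_range Subtype.val_injective
        (by rintro _ ⟨i, rfl⟩; exact ⟨⟨xa i, xa_mem_compl_domVerts_enhancedPowerGraph hn i⟩, rfl⟩),
      Set.ncard_range_of_injective fun i j h => xa.inj h, Nat.card_zmod]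
  rw [← hX]
  refine SimpleGraph.strongDominationNumber_eq_ncard_add_two ?unique_neighbor ?no_edge ?clique
    ?two_clique_vertices
  case unique_neighbor =>
    rintro ⟨_, -⟩ ⟨i, rfl⟩
    refine ⟨⟨xa ((n : ZMod (2 * n)) + i), xa_mem_compl_domVerts_enhancedPowerGraph hn _⟩,
      enhancedPowerGraph_adj_xa_iff.mpr (Or.inr (Or.inr rfl)), ?_⟩
    rintro ⟨g, hg⟩ hadj
    obtain ⟨hg1, hgn⟩ := (mem_compl_domVerts_enhancedPowerGraph_iff hn).mp hg
    obtain h | h | h := enhancedPowerGraph_adj_xa_iff.mp hadj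
    exacts [absurd h hg1, absurd h hgn, Subtype.ext h]
  case no_edge =>
    rintro ⟨(i | i), hv⟩ hvX ⟨(j | j), hw⟩ hadj ⟨_, hwX⟩
    · cases hwX
    · obtain ⟨hv1, hvn⟩ := (mem_compl_domVerts_enhancedPowerGraph_iff hn).mp hv
      obtain h | h | h := enhancedPowerGraph_adj_xa_iff.mp hadj.symm
      exacts [hv1 h, hvn h, absurd h (by simp)]
    all_goals exact hvX ⟨i, rfl⟩
  case clique =>
    rintro ⟨(i | i), hv⟩ hvX ⟨(j | j), hw⟩ hwX hne
    · exact enhancedPowerGraph_adj_a_a fun h => hne (by subst h; rfl)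
    · exact absurd ⟨j, rfl⟩ hwX
    all_goals exact absurd ⟨i, rfl⟩ hvX
  case two_clique_vertices =>
    refine ⟨⟨_, a_natCast_mem_compl_domVerts_enhancedPowerGraph hn (x := 1) (by omega)
      one_ne_zero (by omega)⟩, by simp [X], ⟨_, a_natCast_mem_compl_domVerts_enhancedPowerGraph hn
      (x := n + 1) (by omega) (by omega) (by omega)⟩, by simp [X], fun h => ?_⟩
    exact ZMod.natCast_ne_natCast_of_lt (m := 2 * n) (x := 1) (y := n + 1) (by omega) (by omega)
      (by omega) (a.inj (congrArg Subtype.val h))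

end

end QuaternionGroup

/-- For `k ≥ 3`, `γ^strong(G_E**(Q_{2^k})) = 2^{k-1} + 2`. -/
theorem stmt_4 (k : ℕ) (hk : 3 ≤ k) :
    (properEnhancedPowerGraph (QuaternionGroup (2 ^ (k - 2)))).strongDominationNumber =
      2 ^ (k - 1) + 2 := by
  have hn : 2 ≤ 2 ^ (k - 2) := Nat.le_self_pow (by omega) 2
  rw [QuaternionGroup.strongDominationNumber_properEnhancedPowerGraph hn,
    show k - 1 = k - 2 + 1 by omega, pow_succ, mul_comm]
end

section
/- Let G = P_1 × ⋯ × P_m (m ≥ 1) be a finite nilpotent group whose Sylow subgroups P_i are p_i-groups that are neither cyclic nor generalized quaternion, and for each i let r_i be the number of distinct subgroups of P_i of order p_i. Then every total dominating set of the proper enhanced power graph G_E**(G) has at least (min_{1 ≤ i ≤ m} r_i) + 1 elements, i.e., γ^strong(G_E**(G)) ≥ (min_{1 ≤ i ≤ m} r_i) + 1. -/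
/-! For `p ∣ orderOf g`, call the unique subgroup `σ(g)` of order `p` of `⟨g⟩` the socle of `g`.
Elements of a common cyclic subgroup have the same socle, so adjacent vertices `x, y` of
`G_E(∏ Pᵢ)` satisfy `σ(xᵢ) = σ(yᵢ)` wherever `xᵢ ≠ 1 ≠ yᵢ`.

Let `D` be a total dominating set with `|D| ≤ r = min rᵢ`. If in every factor some subgroup `Kᵢ`
of order `pᵢ` is the socle of no `uᵢ`, `u ∈ D`, then the element `z` with `⟨zᵢ⟩ = Kᵢ` is a vertex
(as `rᵢ ≥ |D| ≥ 2`, `zᵢ` is not adjacent to a generator of another subgroup of order `pᵢ`) without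
a neighbour in `D`. Otherwise, for some `i`, the socles `σ(uᵢ)`, `u ∈ D`, exhaust the `rᵢ`
subgroups of order `pᵢ`; as every `u ∈ D` shares its socle with its neighbour in `D`, some
element of `D` is redundant, and `rᵢ < |D|`. -/

open SimpleGraph

open Subgroup

section CyclicSocle

variable {G : Type*} [Group G]

theorem Subgroup.eq_zpowers_pow_orderOf_div [Finite G] {H : Subgroup G} {c : G}
    (h : H ≤ zpowers c) : H = zpowers (c ^ (orderOf c / Nat.card H)) := by
  obtain ⟨n, rfl⟩ := (le_zpowers_iff c H).mp h
  set d := Nat.card (zpowers (c ^ n)) with hd_def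
  have hd : d ∣ orderOf c := Nat.card_zpowers c ▸ card_dvd_of_le h
  have hdn : orderOf c / d ∣ n := by
    have hcd : orderOf c ∣ n * d := by
      apply orderOf_dvd_of_pow_eq_one
      rw [pow_mul, hd_def, Nat.card_zpowers, pow_orderOf_eq_one]
    refine Nat.dvd_of_mul_dvd_mul_right (Nat.card_pos (α := zpowers (c ^ n))) ?_
    rwa [Nat.div_mul_cancel hd]
  obtain ⟨k, hk⟩ := hdn
  apply eq_of_le_of_card_ge
  · rw [zpowers_le, hk, pow_mul]
    exact pow_mem (mem_zpowers _) k
  · rw [Nat.card_zpowers, orderOf_pow_orderOf_div (orderOf_pos c).ne' hd]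

/-- For `p ∣ orderOf g`, the unique subgroup of order `p` of `⟨g⟩`. -/
noncomputable def cyclicSocle (p : ℕ) (g : G) : Subgroup G :=
  zpowers (g ^ (orderOf g / p))

variable {p : ℕ} {x y c : G}

theorem dvd_orderOf_of_card_cyclicSocle (hx : Nat.card (cyclicSocle p x) = p) :
    p ∣ orderOf x :=
  hx ▸ Nat.card_zpowers x ▸ card_dvd_of_le (zpowers_le.mpr (pow_mem (mem_zpowers x) _))

variable [Finite G]

theorem card_cyclicSocle (hx : p ∣ orderOf x) : Nat.card (cyclicSocle p x) = p := by
  rw [cyclicSocle, Nat.card_zpowers, orderOf_pow_orderOf_div (orderOf_pos x).ne' hx]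

theorem cyclicSocle_eq_zpowers (hx : orderOf x = p) : cyclicSocle p x = zpowers x := by
  rw [cyclicSocle, ← hx, Nat.div_self (orderOf_pos x), pow_one]

theorem cyclicSocle_eq_of_mem_zpowers (hxc : x ∈ zpowers c) (hx : p ∣ orderOf x) :
    cyclicSocle p x = cyclicSocle p c := by
  have hle : cyclicSocle p x ≤ zpowers c :=
    (zpowers_le.mpr (pow_mem (mem_zpowers x) _)).trans (zpowers_le.mpr hxc)
  rw [eq_zpowers_pow_orderOf_div hle, card_cyclicSocle hx, cyclicSocle]

end CyclicSocle

section EnhancedPowerGraph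

variable {G : Type*} [Group G]

theorem enhancedPowerGraph_adj_map {H : Type*} [Group H] (f : G →* H) {x y : G}
    (h : (enhancedPowerGraph G).Adj x y) :
    f x = f y ∨ (enhancedPowerGraph H).Adj (f x) (f y) := by
  obtain ⟨-, w, hx, hy⟩ := h
  refine or_iff_not_imp_left.mpr fun hne => ⟨hne, f w, ?_, ?_⟩ <;>
    rw [← MonoidHom.map_zpowers] <;> exact mem_map_of_mem f ‹_›

variable [Finite G] {p : ℕ} {x y : G}

theorem cyclicSocle_eq_of_adj (h : (enhancedPowerGraph G).Adj x y) (hx : p ∣ orderOf x)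
    (hy : p ∣ orderOf y) : cyclicSocle p x = cyclicSocle p y := by
  obtain ⟨-, c, hxc, hyc⟩ := h
  rw [cyclicSocle_eq_of_mem_zpowers hxc hx, cyclicSocle_eq_of_mem_zpowers hyc hy]

theorem notMem_domVerts_of_orderOf_eq (hx : orderOf x = p) (hy : orderOf y = p)
    (hxy : zpowers x ≠ zpowers y) : x ∉ (enhancedPowerGraph G).domVerts := by
  intro hdom
  have hadj := hdom y fun h => hxy (h ▸ rfl)
  apply hxy
  rw [← cyclicSocle_eq_zpowers hx, ← cyclicSocle_eq_zpowers hy]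
  exact cyclicSocle_eq_of_adj hadj (hx ▸ dvd_rfl) (hy ▸ dvd_rfl)

/-- An element of maximal order that is adjacent to everything generates the group. -/
theorem exists_notMem_domVerts_of_not_isCyclic (h : ¬ IsCyclic G) :
    ∃ a : G, a ∉ (enhancedPowerGraph G).domVerts := by
  obtain ⟨a, ha⟩ := Finite.exists_max (orderOf : G → ℕ)
  refine ⟨a, fun hdom => h ⟨a, fun b => mem_zpowers_iff.mp ?_⟩⟩
  obtain rfl | hba := eq_or_ne b a
  · exact mem_zpowers b
  obtain ⟨-, c, hac, hbc⟩ := hdom b hba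
  have hac' : zpowers a = zpowers c :=
    eq_of_le_of_card_ge (zpowers_le.mpr hac) (by simpa only [Nat.card_zpowers] using ha c)
  exact hac' ▸ hbc

end EnhancedPowerGraph

theorem SimpleGraph.IsTotalDominatingSet.two_le_ncard {V : Type*} [Finite V] [Nonempty V]
    {Γ : SimpleGraph V} {D : Set V} (hD : Γ.IsTotalDominatingSet D) : 2 ≤ D.ncard := by
  obtain ⟨u, huD, -⟩ := hD (Classical.arbitrary V)
  obtain ⟨v, hvD, huv⟩ := hD u
  rw [← Set.ncard_pair huv.ne]
  exact Set.ncard_le_ncard (Set.insert_subset huD (Set.singleton_subset_iff.mpr hvD))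

section Pi

variable {ι : Type*} {P : ι → Type*} [∀ i, Group (P i)]

theorem apply_mem_domVerts_enhancedPowerGraph {g : ∀ i, P i}
    (hg : g ∈ (enhancedPowerGraph (∀ i, P i)).domVerts) (i : ι) :
    g i ∈ (enhancedPowerGraph (P i)).domVerts := by
  classical
  intro b hb
  have hne : Function.update g i b ≠ g := fun h => hb (by simpa using congrFun h i)
  rcases enhancedPowerGraph_adj_map (Pi.evalMonoidHom P i) (hg _ hne) with h | h
  · exact absurd (by simpa using h.symm) hb
  · simpa using h

theorem cyclicSocle_apply_eq_of_adj [∀ i, Finite (P i)] {x y : ∀ i, P i}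
    (h : (enhancedPowerGraph (∀ i, P i)).Adj x y) {i : ι} {p : ℕ} (hx : p ∣ orderOf (x i))
    (hy : p ∣ orderOf (y i)) : cyclicSocle p (x i) = cyclicSocle p (y i) := by
  rcases enhancedPowerGraph_adj_map (Pi.evalMonoidHom P i) h with h | h
  · exact congrArg _ h
  · exact cyclicSocle_eq_of_adj h hx hy

end Pi

section SocleCover

variable {ι : Type*} {P : ι → Type*} [∀ i, Group (P i)] [∀ i, Finite (P i)] {p : ι → ℕ}
  {D : Set ((enhancedPowerGraph (∀ i, P i)).domVertsᶜ : Set (∀ i, P i))}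

theorem exists_forall_exists_cyclicSocle_eq [∀ i, Fact (p i).Prime]
    (hP : ∀ i, IsPGroup (p i) (P i))
    (hD : (properEnhancedPowerGraph (∀ i, P i)).IsTotalDominatingSet D) {i₀ : ι}
    (h2 : 2 ≤ numSubgroupsOfOrder (P i₀) (p i₀)) :
    ∃ i, ∀ K : Subgroup (P i), Nat.card K = p i →
      ∃ u ∈ D, cyclicSocle (p i) ((u : ∀ i, P i) i) = K := by
  by_contra! h
  choose K hK hKD using h
  choose z hz using fun i => (K i).isCyclic_iff_exists_zpowers_eq_top.mp
    (isCyclic_of_prime_card (hK i))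
  have hzord : ∀ i, orderOf (z i) = p i := fun i => by
    rw [← Nat.card_zpowers, hz i]; exact hK i
  have : Nontrivial {K : Subgroup (P i₀) // Nat.card K = p i₀} :=
    Finite.one_lt_card_iff_nontrivial.mp h2
  obtain ⟨K', hK'⟩ := exists_ne (⟨K i₀, hK i₀⟩ : {K : Subgroup (P i₀) // Nat.card K = p i₀})
  obtain ⟨b, hb⟩ := K'.1.isCyclic_iff_exists_zpowers_eq_top.mp (isCyclic_of_prime_card K'.2)
  have hz_mem : z ∈ (enhancedPowerGraph (∀ i, P i)).domVertsᶜ := fun hdom =>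
    notMem_domVerts_of_orderOf_eq (hzord i₀) (by rw [← Nat.card_zpowers, hb]; exact K'.2)
      (by rw [hz, hb]; exact fun h => hK' (Subtype.ext h).symm)
      (apply_mem_domVerts_enhancedPowerGraph hdom i₀)
  obtain ⟨u, huD, hadj⟩ := hD ⟨z, hz_mem⟩
  obtain ⟨j, hj⟩ : ∃ j, (u : ∀ i, P i) j ≠ 1 :=
    Function.ne_iff.mp fun h => u.2 (h ▸ one_mem_domVerts_enhancedPowerGraph)
  refine hKD j u huD ?_
  rw [← hz j, ← cyclicSocle_eq_zpowers (hzord j)]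
  exact (cyclicSocle_apply_eq_of_adj hadj (hzord j ▸ dvd_rfl) ((hP j).dvd_orderOf hj)).symm

theorem numSubgroupsOfOrder_lt_ncard [Finite ι] (hDne : D.Nonempty)
    (hD : (properEnhancedPowerGraph (∀ i, P i)).IsTotalDominatingSet D) {i : ι}
    (hcover : ∀ K : Subgroup (P i), Nat.card K = p i →
      ∃ u ∈ D, cyclicSocle (p i) ((u : ∀ i, P i) i) = K) :
    numSubgroupsOfOrder (P i) (p i) < D.ncard := by
  set S := {K : Subgroup (P i) | Nat.card K = p i}
  set φ := fun u : ((enhancedPowerGraph (∀ i, P i)).domVertsᶜ : Set (∀ i, P i)) =>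
    cyclicSocle (p i) ((u : ∀ i, P i) i)
  obtain ⟨v, hvD, hv⟩ : ∃ v ∈ D, S ⊆ φ '' (D \ {v}) := by
    rcases S.eq_empty_or_nonempty with hS | ⟨K₀, hK₀⟩
    · obtain ⟨v, hvD⟩ := hDne
      exact ⟨v, hvD, hS ▸ Set.empty_subset _⟩
    obtain ⟨u, huD, hu⟩ := hcover K₀ hK₀
    obtain ⟨v, hvD, huv⟩ := hD u
    refine ⟨v, hvD, fun K hK => ?_⟩
    obtain ⟨w, hwD, rfl⟩ := hcover K hK
    obtain rfl | hwv := eq_or_ne w v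
    · refine ⟨u, ⟨huD, huv.ne⟩, cyclicSocle_apply_eq_of_adj huv ?_ ?_⟩
      · exact dvd_orderOf_of_card_cyclicSocle (hu ▸ hK₀)
      · exact dvd_orderOf_of_card_cyclicSocle hK
    · exact ⟨w, ⟨hwD, hwv⟩, rfl⟩
  calc numSubgroupsOfOrder (P i) (p i) = S.ncard := (Nat.card_coe_set_eq S).symm
    _ ≤ (φ '' (D \ {v})).ncard := Set.ncard_le_ncard hv
    _ ≤ (D \ {v}).ncard := Set.ncard_image_le
    _ < D.ncard := Set.ncard_sdiff_singleton_lt_of_mem hvD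

end SocleCover

theorem stmt_14_general (m : ℕ) (hm : 1 ≤ m) (p : Fin m → ℕ) (hp : ∀ i, (p i).Prime)
    (P : Fin m → Type*) [∀ i, Group (P i)] [∀ i, Fintype (P i)]
    (hPp : ∀ i, IsPGroup (p i) (P i))
    (hc : ∀ i, ¬ IsCyclic (P i)) :
    ∀ D : Set ((enhancedPowerGraph (∀ i, P i)).domVertsᶜ : Set (∀ i, P i)),
      (properEnhancedPowerGraph (∀ i, P i)).IsTotalDominatingSet D →
        (⨅ i, numSubgroupsOfOrder (P i) (p i)) + 1 ≤ D.ncard := by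
  intro D hD
  have := fun i => Fact.mk (hp i)
  by_contra! hlt
  have hDr : ∀ i, D.ncard ≤ numSubgroupsOfOrder (P i) (p i) := fun i =>
    (Nat.lt_succ_iff.mp hlt).trans (ciInf_le (OrderBot.bddBelow _) i)
  let i₀ : Fin m := ⟨0, hm⟩
  obtain ⟨a, ha⟩ := exists_notMem_domVerts_of_not_isCyclic (hc i₀)
  have : Nonempty ((enhancedPowerGraph (∀ i, P i)).domVertsᶜ : Set (∀ i, P i)) :=
    ⟨⟨Pi.mulSingle i₀ a, fun hdom =>
      ha (by simpa using apply_mem_domVerts_enhancedPowerGraph hdom i₀)⟩⟩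
  have h2 := hD.two_le_ncard
  have hDne : D.Nonempty := Set.nonempty_of_ncard_ne_zero (by omega)
  obtain ⟨i, hi⟩ := exists_forall_exists_cyclicSocle_eq hPp hD (h2.trans (hDr i₀))
  exact (numSubgroupsOfOrder_lt_ncard hDne hD hi).not_ge (hDr i)

/-- For `G = P₁ × ⋯ × P_m` (`m ≥ 1`) a finite nilpotent group whose Sylow
subgroups are `pᵢ`-groups, neither cyclic nor generalized quaternion, every total dominating
set of `G_E**(G)` has at least `(min_i rᵢ) + 1` elements. -/
theorem stmt_14 (m : ℕ) (hm : 1 ≤ m) (p : Fin m → ℕ) (hp : ∀ i, (p i).Prime)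
    (hinj : Function.Injective p)
    (P : Fin m → Type*) [∀ i, Group (P i)] [∀ i, Fintype (P i)]
    (hPp : ∀ i, IsPGroup (p i) (P i))
    (hc : ∀ i, ¬ IsCyclic (P i)) (hq : ∀ i, ¬ IsGeneralizedQuaternion (P i)) :
    ∀ D : Set ((enhancedPowerGraph (∀ i, P i)).domVertsᶜ : Set (∀ i, P i)),
      (properEnhancedPowerGraph (∀ i, P i)).IsTotalDominatingSet D →
        (⨅ i, numSubgroupsOfOrder (P i) (p i)) + 1 ≤ D.ncard :=
  stmt_14_general m hm p hp P hPp hc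
end
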